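/- Let T ∈ B_A(H) and let P = (T + T^{#_A})/2 and Q = (T − T^{#_A})/(2i) (so that T = P + iQ is the A-Cartesian decomposition of T). Then (1/2)·w_A(T) ≤ min{ w_𝔸([[P, Q],[O, O]]), w_𝔸([[O, P],[Q, O]]) }. -/

import Mathlib

noncomputable section

open ContinuousLinearMap

/-- The semi-inner product induced by a positive operator `A`: `⟪x, y⟫_A = ⟪A x, y⟫`. -/
def sInnerA {E : Type*} [NormedAddCommGroup E] [InnerProductSpace ℂ E]
    (A : E →L[ℂ] E) (x y : E) : ℂ :=
  inner ℂ (A x) y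

/-- The seminorm induced by `A`: `‖x‖_A = √(re ⟪A x, x⟫)`. -/
def sNormA {E : Type*} [NormedAddCommGroup E] [InnerProductSpace ℂ E]
    (A : E →L[ℂ] E) (x : E) : ℝ :=
  Real.sqrt (sInnerA A x x).re

/-- The `A`-operator seminorm: `sup {‖T x‖_A : x ∈ closure (range A), ‖x‖_A = 1}`. -/
def opNormA {E : Type*} [NormedAddCommGroup E] [InnerProductSpace ℂ E]
    (A T : E →L[ℂ] E) : ℝ :=
  sSup {r | ∃ x ∈ closure (Set.range A), sNormA A x = 1 ∧ r = sNormA A (T x)}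

/-- The `A`-numerical radius: `sup {|⟪T x, x⟫_A| : ‖x‖_A = 1}`. -/
def wA {E : Type*} [NormedAddCommGroup E] [InnerProductSpace ℂ E]
    (A T : E →L[ℂ] E) : ℝ :=
  sSup {r | ∃ x, sNormA A x = 1 ∧ r = ‖sInnerA A (T x) x‖}

/-- The `A`-Crawford number: `inf {|⟪T x, x⟫_A| : ‖x‖_A = 1}`. -/
def cA {E : Type*} [NormedAddCommGroup E] [InnerProductSpace ℂ E]
    (A T : E →L[ℂ] E) : ℝ :=
  sInf {r | ∃ x, sNormA A x = 1 ∧ r = ‖sInnerA A (T x) x‖}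

/-- `T ∈ B_A(H)`, i.e. the range of `T* A` is contained in the range of `A`. -/
def memBA {E : Type*} [NormedAddCommGroup E] [InnerProductSpace ℂ E] [CompleteSpace E]
    (A T : E →L[ℂ] E) : Prop :=
  Set.range ((adjoint T) ∘L A) ⊆ Set.range A

/-- `S` is the distinguished `A`-adjoint `T^{#_A}` of `T`:
`A ∘ S = T* ∘ A` and `R(S) ⊆ closure (R(A))`. -/
def IsSharpA {E : Type*} [NormedAddCommGroup E] [InnerProductSpace ℂ E] [CompleteSpace E]
    (A T S : E →L[ℂ] E) : Prop :=
  A ∘L S = (adjoint T) ∘L A ∧ Set.range S ⊆ closure (Set.range A)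

/-- The `2 × 2` operator matrix `[[X, Y], [Z, W]]` acting blockwise on
the Hilbert space direct sum `H ⊕ H`. -/
def blk2 {H : Type*} [NormedAddCommGroup H] [InnerProductSpace ℂ H]
    (X Y Z W : H →L[ℂ] H) : WithLp 2 (H × H) →L[ℂ] WithLp 2 (H × H) :=
  ((WithLp.prodContinuousLinearEquiv 2 ℂ H H).symm : (H × H) →L[ℂ] WithLp 2 (H × H)) ∘L
    ((X ∘L ContinuousLinearMap.fst ℂ H H + Y ∘L ContinuousLinearMap.snd ℂ H H).prod
      (Z ∘L ContinuousLinearMap.fst ℂ H H + W ∘L ContinuousLinearMap.snd ℂ H H)) ∘L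
    ((WithLp.prodContinuousLinearEquiv 2 ℂ H H) : WithLp 2 (H × H) →L[ℂ] H × H)

/-!
Write `z = ⟪T x, x⟫_A` for `‖x‖_A = 1`, and `P`, `Q` for the `A`-real and `A`-imaginary parts
of `T`. Since `T^{#_A}` is an `A`-adjoint of `T`, `⟪P x, x⟫_A = (z + z̄) / 2` and
`⟪Q x, x⟫_A = i (z - z̄) / 2`. The vectors `ξ = (x, i x)` and `ξ = (x, ν x)` with
`ν = (1 - i) / √2` have `‖ξ‖_𝔸 ^ 2 = 2` and give `⟪B ξ, ξ⟫_𝔸 = z`, resp. `ν̄ z`, for the two block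
matrices `B`, hence `|z| ≤ 2 w_𝔸(B)`.

The suprema `w_𝔸(B)` are finite: by polarization and the parallelogram law,
`|⟪S x, y⟫_A| ≤ w_A(S) (‖x‖_A ^ 2 + ‖y‖_A ^ 2)`, which bounds the numerical range of a block
matrix by those of its entries, and `w_A(P), w_A(Q) ≤ w_A(T)`.
-/

open ComplexConjugate Complex

section SemiInnerProduct

variable {H : Type*} [NormedAddCommGroup H] [InnerProductSpace ℂ H] {A : H →L[ℂ] H}

theorem sInnerA_conj (hA : A.IsPositive) (x y : H) : conj (sInnerA A x y) = sInnerA A y x := by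
  rw [sInnerA, sInnerA, inner_conj_symm, hA.inner_left_eq_inner_right]

@[simp]
theorem sInnerA_zero_left (y : H) : sInnerA A 0 y = 0 := by
  rw [sInnerA, map_zero, inner_zero_left]

theorem sInnerA_add_left (x y z : H) : sInnerA A (x + y) z = sInnerA A x z + sInnerA A y z := by
  rw [sInnerA, sInnerA, sInnerA, map_add, inner_add_left]

theorem sInnerA_smul_left (c : ℂ) (x y : H) : sInnerA A (c • x) y = conj c * sInnerA A x y := by
  rw [sInnerA, sInnerA, map_smul, inner_smul_left]

theorem sInnerA_smul_right (c : ℂ) (x y : H) : sInnerA A x (c • y) = c * sInnerA A x y :=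
  inner_smul_right _ _ _

theorem sNormA_nonneg (A : H →L[ℂ] H) (x : H) : 0 ≤ sNormA A x := Real.sqrt_nonneg _

theorem sNormA_sq (hA : A.IsPositive) (x : H) : sNormA A x ^ 2 = (sInnerA A x x).re :=
  Real.sq_sqrt (hA.re_inner_nonneg_left x)

theorem sNormA_smul (c : ℂ) (x : H) : sNormA A (c • x) = ‖c‖ * sNormA A x := by
  have h : sInnerA A (c • x) (c • x) = ((‖c‖ ^ 2 : ℝ) : ℂ) * sInnerA A x x := by
    rw [sInnerA_smul_left, sInnerA_smul_right, ← mul_assoc, conj_mul']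
    push_cast; rfl
  rw [sNormA, sNormA, h, re_ofReal_mul, Real.sqrt_mul (by positivity), Real.sqrt_sq (norm_nonneg c)]

/-- Makes the Cauchy–Schwarz inequality of `PreInnerProductSpace.Core` available for `⟪·, ·⟫_A`. -/
abbrev sInnerACore (hA : A.IsPositive) : PreInnerProductSpace.Core ℂ H where
  inner := sInnerA A
  conj_inner_symm x y := sInnerA_conj hA y x
  re_inner_nonneg x := hA.re_inner_nonneg_left x
  add_left := sInnerA_add_left
  smul_left x y r := sInnerA_smul_left r x y

theorem sInnerA_eq_zero_of_sNormA_eq_zero (hA : A.IsPositive) {v : H} (hv : sNormA A v = 0)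
    (w : H) : sInnerA A w v = 0 := by
  have hcs : ‖sInnerA A w v‖ * ‖sInnerA A v w‖ ≤ (sInnerA A w w).re * (sInnerA A v v).re :=
    @InnerProductSpace.Core.inner_mul_inner_self_le ℂ H _ _ _ (sInnerACore hA) w v
  rw [← sNormA_sq hA v, hv, ← sInnerA_conj hA w v, RCLike.norm_conj] at hcs
  exact norm_eq_zero.mp (by nlinarith [norm_nonneg (sInnerA A w v)])

theorem sNormA_add_sq_add_sNormA_sub_sq (hA : A.IsPositive) (x y : H) :
    sNormA A (x + y) ^ 2 + sNormA A (x - y) ^ 2 = 2 * (sNormA A x ^ 2 + sNormA A y ^ 2) := by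
  have h : sInnerA A (x + y) (x + y) + sInnerA A (x - y) (x - y)
      = 2 * (sInnerA A x x + sInnerA A y y) := by
    simp only [sInnerA, map_add, map_sub, inner_add_left, inner_add_right, inner_sub_left,
      inner_sub_right]
    ring
  simp only [sNormA_sq hA]
  simpa using congrArg re h

end SemiInnerProduct

section NumericalRadius

variable {H : Type*} [NormedAddCommGroup H] [InnerProductSpace ℂ H] {A T : H →L[ℂ] H}

/-- `wA A T` is `sSup (absNumRangeA A T)`. -/
def absNumRangeA (A T : H →L[ℂ] H) : Set ℝ :=
  {r | ∃ x, sNormA A x = 1 ∧ r = ‖sInnerA A (T x) x‖}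

theorem wA_nonneg : 0 ≤ wA A T :=
  Real.sSup_nonneg fun _ ⟨_, _, hr⟩ => hr ▸ norm_nonneg _

theorem wA_le_of_forall {M : ℝ} (hM0 : 0 ≤ M)
    (hM : ∀ x, sNormA A x = 1 → ‖sInnerA A (T x) x‖ ≤ M) : wA A T ≤ M :=
  Real.sSup_le (fun _ ⟨x, hx, hr⟩ => hr ▸ hM x hx) hM0

theorem norm_sInnerA_apply_self_le (hA : A.IsPositive) {M : ℝ}
    (hM : ∀ x, sNormA A x = 1 → ‖sInnerA A (T x) x‖ ≤ M) (v : H) :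
    ‖sInnerA A (T v) v‖ ≤ M * sNormA A v ^ 2 := by
  rcases (sNormA_nonneg A v).eq_or_lt with hr | hr
  · rw [sInnerA_eq_zero_of_sNormA_eq_zero hA hr.symm, ← hr]
    simp
  · set r := sNormA A v
    set u := ((r⁻¹ : ℝ) : ℂ) • v
    have hu : sNormA A u = 1 := by
      rw [sNormA_smul, norm_real, Real.norm_of_nonneg (inv_nonneg.mpr hr.le),
        inv_mul_cancel₀ hr.ne']
    have hv : v = (r : ℂ) • u := by
      rw [smul_smul, ← ofReal_mul, mul_inv_cancel₀ hr.ne', ofReal_one, one_smul]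
    rw [hv, map_smul, sInnerA_smul_left, sInnerA_smul_right, conj_ofReal, ← mul_assoc, norm_mul,
      ← ofReal_mul, norm_real, Real.norm_of_nonneg (by positivity), ← sq, mul_comm]
    exact mul_le_mul_of_nonneg_right (hM u hu) (sq_nonneg r)

theorem norm_sInnerA_apply_self_le_wA (hA : A.IsPositive) (hT : BddAbove (absNumRangeA A T))
    (v : H) : ‖sInnerA A (T v) v‖ ≤ wA A T * sNormA A v ^ 2 :=
  norm_sInnerA_apply_self_le hA (fun x hx => le_csSup hT ⟨x, hx, rfl⟩) v

def SesqBoundA (A T : H →L[ℂ] H) (M : ℝ) : Prop :=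
  ∀ x y, ‖sInnerA A (T x) y‖ ≤ M * (sNormA A x ^ 2 + sNormA A y ^ 2)

theorem SesqBoundA.zero {M : ℝ} (hM : 0 ≤ M) : SesqBoundA A 0 M := fun x y => by
  simp only [zero_apply, sInnerA_zero_left, norm_zero]
  positivity

theorem SesqBoundA.of_forall_sNormA_eq_one (hA : A.IsPositive) {M : ℝ}
    (hM : ∀ x, sNormA A x = 1 → ‖sInnerA A (T x) x‖ ≤ M) : SesqBoundA A T M := by
  intro x y
  have hq := norm_sInnerA_apply_self_le hA hM
  have hpar := sNormA_add_sq_add_sNormA_sub_sq hA x y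
  have hparI := sNormA_add_sq_add_sNormA_sub_sq hA x (I • y)
  rw [sNormA_smul, norm_I, one_mul] at hparI
  have hpol : sInnerA A (T x) y =
      (sInnerA A (T (x + y)) (x + y) - sInnerA A (T (x - y)) (x - y)
        - I * sInnerA A (T (x + I • y)) (x + I • y)
        + I * sInnerA A (T (x - I • y)) (x - I • y)) / 4 :=
    inner_map_polarization' ((A ∘L T : H →L[ℂ] H) : H →ₗ[ℂ] H) x y
  rw [hpol, norm_div, RCLike.norm_ofNat, div_le_iff₀ four_pos]
  calc _ ≤ ‖sInnerA A (T (x + y)) (x + y)‖ + ‖sInnerA A (T (x - y)) (x - y)‖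
        + ‖sInnerA A (T (x + I • y)) (x + I • y)‖ + ‖sInnerA A (T (x - I • y)) (x - I • y)‖ := by
        refine (norm_add_le _ _).trans (add_le_add ((norm_sub_le _ _).trans
          (add_le_add (norm_sub_le _ _) ?_)) ?_) <;> simp
    _ ≤ M * (sNormA A (x + y) ^ 2 + sNormA A (x - y) ^ 2)
        + M * (sNormA A (x + I • y) ^ 2 + sNormA A (x - I • y) ^ 2) := by
        linarith [hq (x + y), hq (x - y), hq (x + I • y), hq (x - I • y)]
    _ = _ := by rw [hpar, hparI]; ring

end NumericalRadius

section BlockMatrix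

variable {H : Type*} [NormedAddCommGroup H] [InnerProductSpace ℂ H] {A : H →L[ℂ] H}

theorem blk2_apply_fst (X Y Z W : H →L[ℂ] H) (ξ : WithLp 2 (H × H)) :
    (blk2 X Y Z W ξ).fst = X ξ.fst + Y ξ.snd := rfl

theorem blk2_apply_snd (X Y Z W : H →L[ℂ] H) (ξ : WithLp 2 (H × H)) :
    (blk2 X Y Z W ξ).snd = Z ξ.fst + W ξ.snd := rfl

theorem sInnerA_blk2_diag (A : H →L[ℂ] H) (ξ η : WithLp 2 (H × H)) :
    sInnerA (blk2 A 0 0 A) ξ η = sInnerA A ξ.fst η.fst + sInnerA A ξ.snd η.snd := by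
  rw [sInnerA, WithLp.prod_inner_apply]
  simp [blk2_apply_fst, blk2_apply_snd, sInnerA]

theorem isPositive_blk2_diag (hA : A.IsPositive) : (blk2 A 0 0 A).IsPositive := by
  refine ⟨fun ξ η => ?_, fun ξ => ?_⟩
  · change inner ℂ (blk2 A 0 0 A ξ) η = inner ℂ ξ (blk2 A 0 0 A η)
    simp [WithLp.prod_inner_apply, blk2_apply_fst, blk2_apply_snd, hA.inner_left_eq_inner_right]
  · change 0 ≤ (sInnerA (blk2 A 0 0 A) ξ ξ).re
    rw [sInnerA_blk2_diag, add_re]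
    exact add_nonneg (hA.re_inner_nonneg_left _) (hA.re_inner_nonneg_left _)

theorem sNormA_blk2_diag_sq (hA : A.IsPositive) (ξ : WithLp 2 (H × H)) :
    sNormA (blk2 A 0 0 A) ξ ^ 2 = sNormA A ξ.fst ^ 2 + sNormA A ξ.snd ^ 2 := by
  rw [sNormA_sq (isPositive_blk2_diag hA), sInnerA_blk2_diag, add_re, sNormA_sq hA, sNormA_sq hA]

theorem bddAbove_absNumRangeA_blk2 (hA : A.IsPositive) {X Y Z W : H →L[ℂ] H} {M : ℝ}
    (hX : SesqBoundA A X M) (hY : SesqBoundA A Y M) (hZ : SesqBoundA A Z M)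
    (hW : SesqBoundA A W M) : BddAbove (absNumRangeA (blk2 A 0 0 A) (blk2 X Y Z W)) := by
  refine ⟨4 * M, ?_⟩
  rintro _ ⟨ξ, hξ, rfl⟩
  have hξ2 : M * (sNormA A ξ.fst ^ 2 + sNormA A ξ.snd ^ 2) = M := by
    rw [← sNormA_blk2_diag_sq hA, hξ, one_pow, mul_one]
  rw [sInnerA_blk2_diag, blk2_apply_fst, blk2_apply_snd, sInnerA_add_left, sInnerA_add_left]
  calc _ ≤ ‖sInnerA A (X ξ.fst) ξ.fst‖ + ‖sInnerA A (Y ξ.snd) ξ.fst‖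
        + (‖sInnerA A (Z ξ.fst) ξ.snd‖ + ‖sInnerA A (W ξ.snd) ξ.snd‖) :=
        (norm_add_le _ _).trans (add_le_add (norm_add_le _ _) (norm_add_le _ _))
    _ ≤ 4 * M := by linarith [hX ξ.fst ξ.fst, hY ξ.snd ξ.fst, hZ ξ.fst ξ.snd, hW ξ.snd ξ.snd]

theorem norm_sInnerA_blk2_diag_le_two_mul_wA (hA : A.IsPositive)
    {B : WithLp 2 (H × H) →L[ℂ] WithLp 2 (H × H)} (hB : BddAbove (absNumRangeA (blk2 A 0 0 A) B))
    {x : H} (hx : sNormA A x = 1) {c : ℂ} (hc : ‖c‖ = 1) :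
    ‖sInnerA (blk2 A 0 0 A) (B (WithLp.toLp 2 (x, c • x))) (WithLp.toLp 2 (x, c • x))‖
      ≤ 2 * wA (blk2 A 0 0 A) B := by
  have h := norm_sInnerA_apply_self_le_wA (isPositive_blk2_diag hA) hB (WithLp.toLp 2 (x, c • x))
  rwa [sNormA_blk2_diag_sq hA, WithLp.toLp_fst, WithLp.toLp_snd, sNormA_smul, hc, one_mul, hx,
    one_pow, mul_comm, one_add_one_eq_two] at h

end BlockMatrix

theorem Complex.exists_norm_eq_one_conj_eq_I_mul : ∃ ν : ℂ, ‖ν‖ = 1 ∧ conj ν = I * ν := by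
  refine ⟨(1 - I) / (√2 : ℝ), ?_, ?_⟩
  · rw [norm_div, norm_real, Real.norm_of_nonneg (Real.sqrt_nonneg 2),
      show (1 : ℂ) - I = (1 : ℝ) + (-1 : ℝ) * I by push_cast; ring, norm_add_mul_I]
    norm_num
  · simp only [map_div₀, map_sub, map_one, conj_I, conj_ofReal, sub_neg_eq_add]
    ring_nf
    rw [I_sq]
    ring

section CartesianDecomposition

variable {H : Type*} [NormedAddCommGroup H] [InnerProductSpace ℂ H] {A T Ts : H →L[ℂ] H}

theorem sInnerA_apply_eq_conj_of_comp_eq_adjoint_comp [CompleteSpace H] (hA : A.IsPositive)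
    (hTs : A ∘L Ts = adjoint T ∘L A) (x y : H) :
    sInnerA A (Ts x) y = conj (sInnerA A (T y) x) := by
  rw [sInnerA, ← comp_apply, hTs, comp_apply, adjoint_inner_left, sInnerA, inner_conj_symm,
    hA.inner_left_eq_inner_right]

def cartRe (T Ts : H →L[ℂ] H) : H →L[ℂ] H := (2 : ℂ)⁻¹ • (T + Ts)

def cartIm (T Ts : H →L[ℂ] H) : H →L[ℂ] H := (2 * I)⁻¹ • (T - Ts)

theorem sInnerA_cartRe_apply_self (hTs : ∀ x y, sInnerA A (Ts x) y = conj (sInnerA A (T y) x))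
    (x : H) :
    sInnerA A (cartRe T Ts x) x = (sInnerA A (T x) x + conj (sInnerA A (T x) x)) / 2 := by
  rw [cartRe, smul_apply, sInnerA_smul_left, add_apply, sInnerA_add_left, hTs]
  simp only [map_inv₀, map_ofNat]
  ring

theorem sInnerA_cartIm_apply_self (hTs : ∀ x y, sInnerA A (Ts x) y = conj (sInnerA A (T y) x))
    (x : H) :
    sInnerA A (cartIm T Ts x) x = I * (sInnerA A (T x) x - conj (sInnerA A (T x) x)) / 2 := by
  rw [cartIm, smul_apply, sInnerA_smul_left, sub_apply, sub_eq_add_neg, ← neg_one_smul ℂ (Ts x),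
    sInnerA_add_left, sInnerA_smul_left, hTs]
  simp only [map_inv₀, map_mul, map_ofNat, conj_I, map_neg, map_one, mul_neg, mul_inv, inv_I]
  ring

theorem norm_sInnerA_cartRe_apply_self_le
    (hTs : ∀ x y, sInnerA A (Ts x) y = conj (sInnerA A (T y) x)) (x : H) :
    ‖sInnerA A (cartRe T Ts x) x‖ ≤ ‖sInnerA A (T x) x‖ := by
  rw [sInnerA_cartRe_apply_self hTs, norm_div, RCLike.norm_ofNat, div_le_iff₀ two_pos]
  exact (norm_add_le _ _).trans (by rw [RCLike.norm_conj]; linarith)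

theorem norm_sInnerA_cartIm_apply_self_le
    (hTs : ∀ x y, sInnerA A (Ts x) y = conj (sInnerA A (T y) x)) (x : H) :
    ‖sInnerA A (cartIm T Ts x) x‖ ≤ ‖sInnerA A (T x) x‖ := by
  rw [sInnerA_cartIm_apply_self hTs, norm_div, norm_mul, norm_I, one_mul, RCLike.norm_ofNat,
    div_le_iff₀ two_pos]
  exact (norm_sub_le _ _).trans (by rw [RCLike.norm_conj]; linarith)

theorem sInnerA_blk2_cartRe_cartIm (hTs : ∀ x y, sInnerA A (Ts x) y = conj (sInnerA A (T y) x))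
    (x : H) :
    sInnerA (blk2 A 0 0 A) (blk2 (cartRe T Ts) (cartIm T Ts) 0 0 (WithLp.toLp 2 (x, I • x)))
      (WithLp.toLp 2 (x, I • x)) = sInnerA A (T x) x := by
  simp only [sInnerA_blk2_diag, blk2_apply_fst, blk2_apply_snd, WithLp.toLp_fst, WithLp.toLp_snd,
    zero_apply, map_smul, sInnerA_add_left, sInnerA_smul_left, sInnerA_cartRe_apply_self hTs,
    sInnerA_cartIm_apply_self hTs, conj_I, sInnerA_zero_left]
  linear_combination (-(sInnerA A (T x) x - conj (sInnerA A (T x) x)) / 2) * I_sq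

theorem sInnerA_blk2_antidiag_cartRe_cartIm
    (hTs : ∀ x y, sInnerA A (Ts x) y = conj (sInnerA A (T y) x)) {ν : ℂ} (hν : conj ν = I * ν)
    (x : H) :
    sInnerA (blk2 A 0 0 A) (blk2 0 (cartRe T Ts) (cartIm T Ts) 0 (WithLp.toLp 2 (x, ν • x)))
      (WithLp.toLp 2 (x, ν • x)) = conj ν * sInnerA A (T x) x := by
  simp only [sInnerA_blk2_diag, blk2_apply_fst, blk2_apply_snd, WithLp.toLp_fst, WithLp.toLp_snd,
    zero_apply, zero_add, map_smul, sInnerA_add_left, sInnerA_smul_left, sInnerA_smul_right,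
    sInnerA_cartRe_apply_self hTs, sInnerA_cartIm_apply_self hTs, sInnerA_zero_left]
  linear_combination (-(sInnerA A (T x) x - conj (sInnerA A (T x) x)) / 2) * hν

end CartesianDecomposition

theorem stmt11_general {H : Type*} [NormedAddCommGroup H] [InnerProductSpace ℂ H] [CompleteSpace H]
    (A : H →L[ℂ] H) (hA : A.IsPositive)
    (T Ts : H →L[ℂ] H) (hTs : IsSharpA A T Ts) :
    (1 / 2) * wA A T ≤
      min (wA (blk2 A 0 0 A) (blk2 ((2 : ℂ)⁻¹ • (T + Ts)) ((2 * Complex.I)⁻¹ • (T - Ts)) 0 0))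
        (wA (blk2 A 0 0 A) (blk2 0 ((2 : ℂ)⁻¹ • (T + Ts)) ((2 * Complex.I)⁻¹ • (T - Ts)) 0)) := by
  change 1 / 2 * wA A T ≤ min (wA (blk2 A 0 0 A) (blk2 (cartRe T Ts) (cartIm T Ts) 0 0))
    (wA (blk2 A 0 0 A) (blk2 0 (cartRe T Ts) (cartIm T Ts) 0))
  by_cases hT : BddAbove (absNumRangeA A T)
  swap
  · -- `wA` is an `sSup`, so it is `0` when the `A`-numerical range of `T` is unbounded.
    have hw : wA A T = 0 := Real.sSup_of_not_bddAbove hT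
    rw [hw, mul_zero]
    exact le_min wA_nonneg wA_nonneg
  have hsharp := sInnerA_apply_eq_conj_of_comp_eq_adjoint_comp hA hTs.1
  have hunit (x : H) (hx : sNormA A x = 1) : ‖sInnerA A (T x) x‖ ≤ wA A T :=
    le_csSup hT ⟨x, hx, rfl⟩
  have hRe : SesqBoundA A (cartRe T Ts) (wA A T) := .of_forall_sNormA_eq_one hA fun x hx =>
    (norm_sInnerA_cartRe_apply_self_le hsharp x).trans (hunit x hx)
  have hIm : SesqBoundA A (cartIm T Ts) (wA A T) := .of_forall_sNormA_eq_one hA fun x hx =>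
    (norm_sInnerA_cartIm_apply_self_le hsharp x).trans (hunit x hx)
  have h0 : SesqBoundA A 0 (wA A T) := .zero wA_nonneg
  obtain ⟨ν, hν1, hνI⟩ := Complex.exists_norm_eq_one_conj_eq_I_mul
  refine le_min ?_ ?_ <;> rw [one_div, inv_mul_le_iff₀ two_pos] <;>
    refine wA_le_of_forall (mul_nonneg zero_le_two wA_nonneg) fun x hx => ?_
  · rw [← sInnerA_blk2_cartRe_cartIm hsharp x]
    exact norm_sInnerA_blk2_diag_le_two_mul_wA hA (bddAbove_absNumRangeA_blk2 hA hRe hIm h0 h0) hx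
      (by simp)
  · rw [← one_mul ‖_‖, ← hν1, ← RCLike.norm_conj, ← norm_mul,
      ← sInnerA_blk2_antidiag_cartRe_cartIm hsharp hνI x]
    exact norm_sInnerA_blk2_diag_le_two_mul_wA hA (bddAbove_absNumRangeA_blk2 hA h0 hRe hIm h0) hx
      hν1

theorem stmt11 {H : Type*} [NormedAddCommGroup H] [InnerProductSpace ℂ H] [CompleteSpace H]
    (A : H →L[ℂ] H) (hA : A.IsPositive)
    (T Ts : H →L[ℂ] H) (hT : memBA A T) (hTs : IsSharpA A T Ts) :
    (1 / 2) * wA A T ≤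
      min (wA (blk2 A 0 0 A) (blk2 ((2 : ℂ)⁻¹ • (T + Ts)) ((2 * Complex.I)⁻¹ • (T - Ts)) 0 0))
        (wA (blk2 A 0 0 A) (blk2 0 ((2 : ℂ)⁻¹ • (T + Ts)) ((2 * Complex.I)⁻¹ • (T - Ts)) 0)) :=
  stmt11_general A hA T Ts hTs
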